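/- arXiv:1501.05135 — 2 statements merged into one kernel-verified Lean document; each statement's English description precedes it below -/
import Mathlib

section
/- Let a and b be as in the context, let c ∈ ℂ and let v ∈ ℂ with Re(v) > 1 and (v+1)(v+2)⋯(v+m−1) ≠ m!. If b_n = c·n^v + o(n^{Re(v)}) as n → ∞ (with n^v := exp(v·log n)), then a_n = ( c / (1 − m!·Γ(v+1)/Γ(v+m)) )·n^v + o(n^{Re(v)}) as n → ∞. -/
open Finset Nat Filter Topology Asymptotics

lemma prod_step {K : Type*} [Field K] [CharZero K] (y : K) (k : ℕ) :
    (∏ i ∈ range (k+1), (y+i))/((k+1)! : K) + (∏ i ∈ range k, (y+1+i))/(k ! : K)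
      = (∏ i ∈ range (k+1), (y+1+i))/((k+1)! : K) := by
  have h0 : ∀ i ∈ range k, (y+((i+1:ℕ):K)) = y+1+i := fun i _ => by push_cast; ring
  have h1 : ∏ i ∈ range (k+1), (y+(i:K)) = y * ∏ i ∈ range k, (y+1+(i:K)) := by
    rw [Finset.prod_range_succ', Finset.prod_congr rfl h0]
    push_cast; ring
  have h2 : ∏ i ∈ range (k+1), (y+1+(i:K)) = (∏ i ∈ range k, (y+1+(i:K))) * (y+1+k) :=
    Finset.prod_range_succ _ _
  have hk : ((k)! : K) ≠ 0 := Nat.cast_ne_zero.mpr k.factorial_ne_zero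
  have hk1 : ((k:K)+1) ≠ 0 := by
    have := Nat.cast_ne_zero (R := K).mpr k.succ_ne_zero
    push_cast at this; exact this
  rw [h1, h2, Nat.factorial_succ]
  push_cast
  field_simp
  ring

lemma vander {K : Type*} [Field K] [CharZero K] (x : K) (m2 : ℕ) : ∀ k : ℕ,
    ∑ j ∈ range (k+1), ((m2 + (k - j)).choose m2 : K) * ((∏ i ∈ range j, (x+1+i)) / j !)
      = (∏ i ∈ range k, (x + m2 + 2 + i)) / k ! := by
  induction m2 with
  | zero =>
    intro k
    induction k with
    | zero => simp
    | succ k ih =>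
      rw [Finset.sum_range_succ]
      have e1 : ∀ j ∈ range (k+1), ((0 + (k + 1 - j)).choose 0 : K) * ((∏ i ∈ range j, (x+1+i)) / j !)
          = ((0 + (k - j)).choose 0 : K) * ((∏ i ∈ range j, (x+1+i)) / j !) := by
        intro j hj; simp [Nat.choose_zero_right]
      rw [Finset.sum_congr rfl e1, ih]
      have p1 : ∏ i ∈ range k, (x+((0:ℕ):K)+2+i) = ∏ i ∈ range k, (x+1+1+(i:K)) :=
        Finset.prod_congr rfl fun i _ => by push_cast; ring
      have p2 : ∏ i ∈ range (k+1), (x+((0:ℕ):K)+2+i) = ∏ i ∈ range (k+1), (x+1+1+(i:K)) :=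
        Finset.prod_congr rfl fun i _ => by push_cast; ring
      rw [p1, p2]
      simp only [Nat.choose_zero_right, Nat.cast_one, one_mul]
      linear_combination prod_step (x+1) k
  | succ m2 ihm =>
    intro k
    induction k with
    | zero => simp
    | succ k ih =>
      rw [Finset.sum_range_succ]
      have e1 : ∀ j ∈ range (k+1), ((m2 + 1 + (k + 1 - j)).choose (m2+1) : K) * ((∏ i ∈ range j, (x+1+i)) / j !)
          = ((m2 + (k + 1 - j)).choose m2 : K) * ((∏ i ∈ range j, (x+1+i)) / j !)
            + ((m2 + 1 + (k - j)).choose (m2+1) : K) * ((∏ i ∈ range j, (x+1+i)) / j !) := by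
        intro j hj
        rw [mem_range] at hj
        have h3 : m2 + 1 + (k + 1 - j) = (m2 + 1 + (k - j)) + 1 := by omega
        have h4 : m2 + (k + 1 - j) = m2 + 1 + (k - j) := by omega
        rw [h3, h4, Nat.choose_succ_succ]
        push_cast
        ring
      rw [Finset.sum_congr rfl e1, Finset.sum_add_distrib, ih]
      have e2 : ∑ j ∈ range (k+1), ((m2 + (k + 1 - j)).choose m2 : K) * ((∏ i ∈ range j, (x+1+i)) / j !)
            + ((m2 + 1 + (k + 1 - (k+1))).choose (m2+1) : K) * ((∏ i ∈ range (k+1), (x+1+i)) / (k+1) !)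
          = ∑ j ∈ range (k+1+1), ((m2 + (k + 1 - j)).choose m2 : K) * ((∏ i ∈ range j, (x+1+i)) / j !) := by
        conv_rhs => rw [Finset.sum_range_succ]
        norm_num
      rw [add_right_comm, e2, ihm (k+1)]
      have p1 : ∏ i ∈ range k, (x+((m2+1:ℕ):K)+2+i) = ∏ i ∈ range k, (x+(m2:K)+2+1+i) :=
        Finset.prod_congr rfl fun i _ => by push_cast; ring
      have p2 : ∏ i ∈ range (k+1), (x+((m2+1:ℕ):K)+2+i) = ∏ i ∈ range (k+1), (x+(m2:K)+2+1+i) :=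
        Finset.prod_congr rfl fun i _ => by push_cast; ring
      rw [p1, p2]
      linear_combination prod_step (x+(m2:K)+2) k


noncomputable def wseq {K : Type*} [Field K] (x : K) (j : ℕ) : K :=
  (∏ i ∈ Finset.range j, (x+1+i)) / j !

lemma vander' {K : Type*} [Field K] [CharZero K] (x : K) (m2 k : ℕ) :
    ∑ j ∈ range (k+1), ((m2 + (k - j)).choose m2 : K) * wseq x j
      = (∏ i ∈ range k, (x + m2 + 2 + i)) / k ! := by
  simp only [wseq]
  exact vander x m2 k

lemma eigen {K : Type*} [Field K] [CharZero K] (x : K) (m n : ℕ) (hm : 2 ≤ m) (hn : m - 1 ≤ n)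
    (hD : (∏ i ∈ Finset.range (m-1), (x+1+i)) ≠ 0) :
    (m:K) * ∑ j ∈ range (n+2-m), (((n-1-j).choose (m-2) : K) / (n.choose (m-1) : K)) * wseq x j
      = ((m ! : K) / ∏ i ∈ range (m-1), (x+1+i)) * wseq x n := by
  have hk : n + 2 - m = (n+1-m) + 1 := by omega
  rw [hk]
  have e1 : ∀ j ∈ range (n+1-m+1),
      (((n-1-j).choose (m-2) : K) / (n.choose (m-1) : K)) * wseq x j
        = ((n.choose (m-1) : K))⁻¹ * ((((m-2) + ((n+1-m) - j)).choose (m-2) : K) * wseq x j) := by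
    intro j hj
    rw [mem_range] at hj
    have h2 : n-1-j = (m-2)+((n+1-m)-j) := by omega
    rw [← h2]; ring
  rw [Finset.sum_congr rfl e1, ← Finset.mul_sum, vander' x (m-2) (n+1-m)]
  -- nonzero facts
  have hC : (n.choose (m-1) : K) ≠ 0 := Nat.cast_ne_zero.mpr (Nat.choose_pos hn).ne'
  have hnf : ((n)! : K) ≠ 0 := Nat.cast_ne_zero.mpr n.factorial_ne_zero
  have hkf : (((n+1-m))! : K) ≠ 0 := Nat.cast_ne_zero.mpr (n+1-m).factorial_ne_zero
  have hmf : (((m-1))! : K) ≠ 0 := Nat.cast_ne_zero.mpr (m-1).factorial_ne_zero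
  -- choose identity
  have hch : (n.choose (m-1) : K) * ((m-1)! : K) * (((n+1-m))! : K) = ((n)! : K) := by
    have h := Nat.choose_mul_factorial_mul_factorial hn
    have h3 : n - (m-1) = n+1-m := by omega
    rw [h3] at h
    exact_mod_cast congrArg (Nat.cast : ℕ → K) h
  -- m! = m * (m-1)!
  have hmm : ((m)! : K) = (m : K) * ((m-1)! : K) := by
    have : m ! = m * (m-1)! := by
      conv_lhs => rw [show m = (m-1)+1 by omega]
      rw [Nat.factorial_succ]
      congr 1
      omega
    exact_mod_cast congrArg (Nat.cast : ℕ → K) this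
  -- product split
  have hsplit : ∏ i ∈ range n, (x+1+(i:K))
      = (∏ i ∈ range (m-1), (x+1+(i:K))) * ∏ i ∈ range (n+1-m), (x+((m-2:ℕ):K)+2+i) := by
    conv_lhs => rw [show n = (m-1) + (n+1-m) by omega, Finset.prod_range_add]
    congr 1
    refine Finset.prod_congr rfl fun i _ => ?_
    have c1 : ((m-1+i:ℕ):K) = (m:K)-1+i := by
      push_cast [Nat.cast_sub (show 1 ≤ m by omega)]; ring
    have c2 : ((m-2:ℕ):K) = (m:K)-2 := by
      push_cast [Nat.cast_sub hm]; ring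
    rw [c1, c2]; ring
  have pnorm : ∏ i ∈ range (n+1-m), (x+((m-2:ℕ):K)+2+i) = ∏ i ∈ range (n+1-m), (x+((m:K)-2)+2+i) := by
    refine Finset.prod_congr rfl fun i _ => ?_
    have c2 : ((m-2:ℕ):K) = (m:K)-2 := by push_cast [Nat.cast_sub hm]; ring
    rw [c2]
  rw [wseq, hsplit, pnorm, hmm, ← hch]
  field_simp




lemma wseq_real_pos {s : ℝ} (hs : 0 < s) (n : ℕ) : 0 < wseq s n := by
  rw [wseq]
  apply _root_.div_pos
  · exact Finset.prod_pos fun i _ => by positivity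
  · exact_mod_cast n.factorial_pos

lemma wseq_ne_zero {v : ℂ} (hv : 0 < v.re) (n : ℕ) : wseq v n ≠ 0 := by
  rw [wseq]
  apply div_ne_zero
  · refine Finset.prod_ne_zero_iff.mpr fun i _ => ?_
    intro h
    have : (v+1+(i:ℂ)).re = 0 := by rw [h]; simp
    simp [Complex.add_re] at this
    nlinarith [Nat.cast_nonneg (α := ℝ) i]
  · exact_mod_cast n.factorial_ne_zero

lemma prod_shift {v : ℂ} (n : ℕ) :
    ∏ j ∈ range (n+1), (v + (j:ℂ)) = v * ((n ! : ℂ) * wseq v n) := by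
  rw [Finset.prod_range_succ']
  have h : ∀ i ∈ range n, (v + ((i+1:ℕ):ℂ)) = v + 1 + i := fun i _ => by push_cast; ring
  rw [Finset.prod_congr rfl h, wseq]
  have : ((n)! : ℂ) ≠ 0 := Nat.cast_ne_zero.mpr n.factorial_ne_zero
  field_simp
  ring

lemma prod_shift_real {s : ℝ} (n : ℕ) :
    ∏ j ∈ range (n+1), (s + (j:ℝ)) = s * ((n ! : ℝ) * wseq s n) := by
  rw [Finset.prod_range_succ']
  have h : ∀ i ∈ range n, (s + ((i+1:ℕ):ℝ)) = s + 1 + i := fun i _ => by push_cast; ring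
  rw [Finset.prod_congr rfl h, wseq]
  have : ((n)! : ℝ) ≠ 0 := Nat.cast_ne_zero.mpr n.factorial_ne_zero
  field_simp
  ring

lemma tendsto_wseq_complex {v : ℂ} (hv : 1 < v.re) :
    Tendsto (fun n : ℕ => Complex.Gamma (v+1) * wseq v n / (n:ℂ)^v) atTop (𝓝 1) := by
  have hv0 : v ≠ 0 := fun h => by simp [h] at hv; linarith
  have hG : Complex.Gamma v ≠ 0 := by
    apply Complex.Gamma_ne_zero
    intro k h
    have : v.re = -(k:ℝ) := by rw [h]; simp
    have : (0:ℝ) ≤ (k:ℝ) := Nat.cast_nonneg k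
    linarith
  have h1 : Tendsto (fun n : ℕ => Complex.Gamma v / Complex.GammaSeq v n) atTop
      (𝓝 (Complex.Gamma v / Complex.Gamma v)) :=
    Tendsto.div tendsto_const_nhds (Complex.GammaSeq_tendsto_Gamma v) hG
  rw [div_self hG] at h1
  apply h1.congr'
  filter_upwards [eventually_ge_atTop 1] with n hn
  have hn0 : ((n:ℂ)) ≠ 0 := Nat.cast_ne_zero.mpr (by omega)
  have hnv : (n:ℂ)^v ≠ 0 := by
    rw [Complex.cpow_def_of_ne_zero hn0]; exact Complex.exp_ne_zero _
  have hnf : ((n)! : ℂ) ≠ 0 := Nat.cast_ne_zero.mpr n.factorial_ne_zero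
  have hw : wseq v n ≠ 0 := wseq_ne_zero (by linarith) n
  rw [Complex.GammaSeq, prod_shift]
  rw [Complex.Gamma_add_one _ hv0]
  field_simp

lemma tendsto_wseq_real {s : ℝ} (hs : 0 < s) :
    Tendsto (fun n : ℕ => Real.Gamma (s+1) * wseq s n / (n:ℝ)^s) atTop (𝓝 1) := by
  have hG : Real.Gamma s ≠ 0 := (Real.Gamma_pos_of_pos hs).ne'
  have h1 : Tendsto (fun n : ℕ => Real.Gamma s / Real.GammaSeq s n) atTop
      (𝓝 (Real.Gamma s / Real.Gamma s)) :=
    Tendsto.div tendsto_const_nhds (Real.GammaSeq_tendsto_Gamma s) hG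
  rw [div_self hG] at h1
  apply h1.congr'
  filter_upwards [eventually_ge_atTop 1] with n hn
  have hn0 : (0:ℝ) < (n:ℝ) := by exact_mod_cast Nat.pos_of_ne_zero (by omega)
  have hnv : (n:ℝ)^s ≠ 0 := (Real.rpow_pos_of_pos hn0 s).ne'
  have hnf : ((n)! : ℝ) ≠ 0 := Nat.cast_ne_zero.mpr n.factorial_ne_zero
  have hw : wseq s n ≠ 0 := (wseq_real_pos hs n).ne'
  rw [Real.GammaSeq, prod_shift_real]
  rw [Real.Gamma_add_one hs.ne']
  field_simp

lemma gamma_prod {v : ℂ} (hv : 1 < v.re) (t : ℕ) :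
    Complex.Gamma (v + 1 + t) = Complex.Gamma (v+1) * ∏ i ∈ range t, (v+1+i) := by
  induction t with
  | zero => simp
  | succ t ih =>
    have harg : (v + 1 + (t:ℂ)) ≠ 0 := by
      intro h
      have : (v+1+(t:ℂ)).re = 0 := by rw [h]; simp
      simp [Complex.add_re] at this
      nlinarith [Nat.cast_nonneg (α := ℝ) t]
    have e : (v + 1 + ((t+1:ℕ):ℂ)) = (v + 1 + t) + 1 := by push_cast; ring
    rw [e, Complex.Gamma_add_one _ harg, ih, Finset.prod_range_succ]
    ring


-- bound π_{n,j} ≤ (m-1)/n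
lemma pi_le (m n j : ℕ) (hm : 2 ≤ m) (hn : m - 1 ≤ n) :
    ((n-1-j).choose (m-2) : ℝ) / (n.choose (m-1) : ℝ) ≤ ((m:ℝ)-1)/n := by
  have hn1 : 1 ≤ n := by omega
  have hC : 0 < (n.choose (m-1) : ℝ) := by exact_mod_cast Nat.choose_pos hn
  have hkey : (m-1) * n.choose (m-1) = n * (n-1).choose (m-2) := by
    have := Nat.add_one_mul_choose_eq (n-1) (m-2)
    have h1 : (n-1)+1 = n := by omega
    have h2 : (m-2)+1 = m-1 := by omega
    rw [h1] at this
    rw [show (m-2)+1 = m-1 by omega] at this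
    rw [this]
    exact Nat.mul_comm _ _
  have hmono : ((n-1-j).choose (m-2) : ℝ) ≤ ((n-1).choose (m-2) : ℝ) := by
    exact_mod_cast Nat.choose_le_choose (m-2) (Nat.sub_le _ _)
  rw [div_le_div_iff₀ hC (by exact_mod_cast hn1)]
  calc ((n-1-j).choose (m-2) : ℝ) * n ≤ ((n-1).choose (m-2) : ℝ) * n := by
        apply mul_le_mul_of_nonneg_right hmono (by positivity)
    _ = ((m:ℝ)-1) * (n.choose (m-1) : ℝ) := by
        have : (((m-1) * n.choose (m-1) : ℕ) : ℝ) = (((n * ((n-1).choose (m-2)) : ℕ)) : ℝ) := by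
          exact_mod_cast congrArg (Nat.cast : ℕ → ℝ) hkey
        push_cast at this
        have hm1 : ((m-1:ℕ):ℝ) = (m:ℝ)-1 := by push_cast [Nat.cast_sub (show 1 ≤ m by omega)]; ring
        rw [hm1] at this
        linarith

lemma stability (m : ℕ) (hm : 2 ≤ m) (e r : ℕ → ℂ) (W : ℕ → ℝ)
    (hW : ∀ n, 0 < W n) (hWtop : Tendsto W atTop atTop)
    (Q : ℝ) (hQ0 : 0 ≤ Q) (hQ1 : Q < 1)
    (heigen : ∀ n, m - 1 ≤ n → (m:ℝ) * ∑ j ∈ Finset.range (n+2-m),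
        (((n-1-j).choose (m-2) : ℝ) / (n.choose (m-1) : ℝ)) * W j = Q * W n)
    (hrec : ∀ n, m - 1 ≤ n → e n = (m:ℂ) * ∑ j ∈ Finset.range (n+2-m),
        (((n-1-j).choose (m-2) : ℂ) / (n.choose (m-1) : ℂ)) * e j + r n)
    (hr : ∀ ε > 0, ∀ᶠ n in atTop, ‖r n‖ ≤ ε * W n) :
    ∀ ε > 0, ∀ᶠ n in atTop, ‖e n‖ ≤ ε * W n := by
  set p : ℕ → ℕ → ℝ := fun n j => ((n-1-j).choose (m-2) : ℝ) / (n.choose (m-1) : ℝ) with hp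
  have hp0 : ∀ n j, 0 ≤ p n j := fun n j => by positivity
  -- norm inequality from the recursion
  have hnorm : ∀ n, m - 1 ≤ n →
      ‖e n‖ ≤ (m:ℝ) * ∑ j ∈ Finset.range (n+2-m), p n j * ‖e j‖ + ‖r n‖ := by
    intro n hn
    rw [hrec n hn]
    have hsum : ‖(m:ℂ) * ∑ j ∈ Finset.range (n+2-m),
        (((n-1-j).choose (m-2) : ℂ) / ((n.choose (m-1)) : ℂ)) * e j‖
        ≤ (m:ℝ) * ∑ j ∈ Finset.range (n+2-m), p n j * ‖e j‖ := by
      rw [norm_mul, Complex.norm_natCast]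
      apply mul_le_mul_of_nonneg_left _ (Nat.cast_nonneg m)
      refine le_trans (norm_sum_le _ _) ?_
      apply Finset.sum_le_sum
      intro j hj
      rw [norm_mul]
      have hcast : (((n-1-j).choose (m-2) : ℂ) / ((n.choose (m-1)) : ℂ)) = ((p n j : ℝ) : ℂ) := by
        rw [hp]; push_cast; ring
      rw [hcast, Complex.norm_real, Real.norm_eq_abs, abs_of_nonneg (hp0 n j)]
    refine le_trans (norm_add_le _ _) ?_
    exact add_le_add hsum le_rfl
  -- Step A: global bound
  obtain ⟨N₀, hN₀⟩ : ∃ N₀, ∀ n ≥ N₀, ‖r n‖ ≤ (1-Q) * W n :=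
    (eventually_atTop.mp (hr (1-Q) (by linarith)))
  set K : ℝ := 1 + ∑ t ∈ Finset.range (N₀ + m), ‖e t‖ / W t with hK
  have hK1 : 1 ≤ K := by
    rw [hK]
    have : 0 ≤ ∑ t ∈ Finset.range (N₀ + m), ‖e t‖ / W t :=
      Finset.sum_nonneg fun t _ => div_nonneg (norm_nonneg _) (hW t).le
    linarith
  have hKbound : ∀ n, ‖e n‖ ≤ K * W n := by
    intro n
    induction n using Nat.strong_induction_on with
    | _ n ih =>
      by_cases hcase : n < N₀ + m
      · have h1 : ‖e n‖ / W n ≤ ∑ t ∈ Finset.range (N₀ + m), ‖e t‖ / W t :=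
          Finset.single_le_sum (f := fun t => ‖e t‖ / W t)
            (fun t _ => div_nonneg (norm_nonneg _) (hW t).le) (Finset.mem_range.mpr hcase)
        have h2 : ‖e n‖ / W n ≤ K := by rw [hK]; linarith
        calc ‖e n‖ = (‖e n‖ / W n) * W n := (div_mul_cancel₀ _ (hW n).ne').symm
          _ ≤ K * W n := mul_le_mul_of_nonneg_right h2 (hW n).le
      · push_neg at hcase
        have hn : m - 1 ≤ n := by omega
        have hnN : N₀ ≤ n := by omega
        have step1 : ∑ j ∈ Finset.range (n+2-m), p n j * ‖e j‖
            ≤ ∑ j ∈ Finset.range (n+2-m), p n j * (K * W j) := by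
          apply Finset.sum_le_sum
          intro j hj
          rw [Finset.mem_range] at hj
          have hjn : j < n := by omega
          exact mul_le_mul_of_nonneg_left (ih j hjn) (hp0 n j)
        have step2 : (m:ℝ) * ∑ j ∈ Finset.range (n+2-m), p n j * (K * W j) = K * (Q * W n) := by
          have : ∑ j ∈ Finset.range (n+2-m), p n j * (K * W j)
              = K * ∑ j ∈ Finset.range (n+2-m), p n j * W j := by
            rw [Finset.mul_sum]; apply Finset.sum_congr rfl; intros; ring
          rw [this, ← heigen n hn]; ring
        calc ‖e n‖ ≤ (m:ℝ) * ∑ j ∈ Finset.range (n+2-m), p n j * ‖e j‖ + ‖r n‖ := hnorm n hn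
          _ ≤ (m:ℝ) * ∑ j ∈ Finset.range (n+2-m), p n j * (K * W j) + (1-Q) * W n := by
              gcongr
              · exact hN₀ n hnN
          _ = K * (Q * W n) + (1-Q) * W n := by rw [step2]
          _ ≤ K * W n := by
              nlinarith [mul_nonneg (mul_nonneg (by linarith : (0:ℝ) ≤ K - 1)
                (by linarith : (0:ℝ) ≤ 1 - Q)) (hW n).le]
  -- Step B: improvement
  have hKpos : 0 < K := lt_of_lt_of_le one_pos hK1
  have stepB : ∀ K' : ℝ, 0 < K' → (∀ᶠ n in atTop, ‖e n‖ ≤ K' * W n) →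
      (∀ᶠ n in atTop, ‖e n‖ ≤ ((1+Q)/2 * K') * W n) := by
    intro K' hK' hEv
    set δ : ℝ := (1-Q)/4 * K' with hδ
    have hδpos : 0 < δ := by rw [hδ]; nlinarith
    obtain ⟨N₁, hN₁⟩ : ∃ N₁, ∀ n ≥ N₁, ‖e n‖ ≤ K' * W n ∧ ‖r n‖ ≤ δ * W n := by
      obtain ⟨A, hA⟩ := eventually_atTop.mp hEv
      obtain ⟨B, hB⟩ := eventually_atTop.mp (hr δ hδpos)
      exact ⟨max A B, fun n hn => ⟨hA n (le_trans (le_max_left _ _) hn),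
        hB n (le_trans (le_max_right _ _) hn)⟩⟩
    set S : ℝ := ∑ t ∈ Finset.range N₁, W t with hS
    have hSnn : 0 ≤ S := Finset.sum_nonneg fun t _ => (hW t).le
    set C : ℝ := (m:ℝ) * N₁ * (((m:ℝ)-1) * (K * S)) with hC
    have hCnn : 0 ≤ C := by
      rw [hC]
      have h1 : (1:ℝ) ≤ (m:ℝ) := by exact_mod_cast (by omega : 1 ≤ m)
      exact mul_nonneg (mul_nonneg (Nat.cast_nonneg m) (Nat.cast_nonneg N₁))
        (mul_nonneg (by linarith) (mul_nonneg hKpos.le hSnn))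
    -- eventually: C/n ≤ δ and W n ≥ 1
    have hev1 : ∀ᶠ n : ℕ in atTop, C ≤ δ * n := by
      have := Filter.Tendsto.eventually_ge_atTop (tendsto_natCast_atTop_atTop (R := ℝ)) (C / δ)
      filter_upwards [this] with n hn
      rw [div_le_iff₀ hδpos] at hn
      linarith
    have hev2 : ∀ᶠ n : ℕ in atTop, 1 ≤ W n := hWtop.eventually_ge_atTop 1
    filter_upwards [hev1, hev2, eventually_ge_atTop (N₁ + m), eventually_ge_atTop 1]
      with n hn1 hn2 hn3 hn4
    have hn : m - 1 ≤ n := by omega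
    have hnpos : (0:ℝ) < n := by exact_mod_cast (by omega : 0 < n)
    -- termwise bound
    have key : ∀ j ∈ Finset.range (n+2-m), p n j * ‖e j‖
        ≤ p n j * (K' * W j) + (if j < N₁ then (((m:ℝ)-1)/n) * (K * W j) else 0) := by
      intro j hj
      by_cases hjN : j < N₁
      · simp only [hjN, if_true]
        have h1 : p n j * ‖e j‖ ≤ p n j * (K * W j) :=
          mul_le_mul_of_nonneg_left (hKbound j) (hp0 n j)
        have h2 : p n j * (K * W j) ≤ (((m:ℝ)-1)/n) * (K * W j) := by
          exact mul_le_mul_of_nonneg_right (pi_le m n j hm hn) (mul_nonneg hKpos.le (hW j).le)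
        have h3 : 0 ≤ p n j * (K' * W j) := by
          exact mul_nonneg (hp0 n j) (mul_nonneg hK'.le (hW j).le)
        calc p n j * ‖e j‖ ≤ p n j * (K * W j) := h1
          _ ≤ (((m:ℝ)-1)/n) * (K * W j) := h2
          _ ≤ p n j * (K' * W j) + (((m:ℝ)-1)/n) * (K * W j) := le_add_of_nonneg_left h3
      · simp only [hjN, if_false, add_zero]
        push_neg at hjN
        exact mul_le_mul_of_nonneg_left ((hN₁ j hjN).1) (hp0 n j)
    have sum1 : ∑ j ∈ Finset.range (n+2-m), p n j * ‖e j‖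
        ≤ ∑ j ∈ Finset.range (n+2-m), p n j * (K' * W j)
          + ∑ j ∈ Finset.range (n+2-m), (if j < N₁ then (((m:ℝ)-1)/n) * (K * W j) else 0) := by
      rw [← Finset.sum_add_distrib]
      exact Finset.sum_le_sum key
    -- bound the ite sum
    have sum2 : ∑ j ∈ Finset.range (n+2-m), (if j < N₁ then (((m:ℝ)-1)/n) * (K * W j) else 0)
        ≤ (N₁:ℝ) * ((((m:ℝ)-1)/n) * (K * S)) := by
      have h1 : ∀ j ∈ Finset.range (n+2-m), (if j < N₁ then (((m:ℝ)-1)/n) * (K * W j) else 0)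
          ≤ (if j < N₁ then (((m:ℝ)-1)/n) * (K * S) else 0) := by
        intro j hj
        by_cases hjN : j < N₁
        · simp only [hjN, if_true]
          have hWS : W j ≤ S := by
            rw [hS]
            exact Finset.single_le_sum (f := fun t => W t) (fun t _ => (hW t).le)
              (Finset.mem_range.mpr hjN)
          have hm1 : (0:ℝ) ≤ ((m:ℝ)-1)/n := by
            apply div_nonneg _ hnpos.le
            have : (1:ℝ) ≤ (m:ℝ) := by exact_mod_cast (by omega : 1 ≤ m)
            linarith
          gcongr
        · simp [hjN]
      refine le_trans (Finset.sum_le_sum h1) ?_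
      rw [← Finset.sum_filter]
      rw [Finset.sum_const]
      have hcard : ((Finset.range (n+2-m)).filter (· < N₁)).card ≤ N₁ := by
        have hsub : (Finset.range (n+2-m)).filter (· < N₁) ⊆ Finset.range N₁ := by
          intro x hx
          simp only [Finset.mem_filter, Finset.mem_range] at hx ⊢
          exact hx.2
        calc ((Finset.range (n+2-m)).filter (· < N₁)).card ≤ (Finset.range N₁).card :=
              Finset.card_le_card hsub
          _ = N₁ := Finset.card_range N₁
      rw [nsmul_eq_mul]
      have hTnn : 0 ≤ (((m:ℝ)-1)/n) * (K * S) := by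
        have h1m : (1:ℝ) ≤ (m:ℝ) := by exact_mod_cast (by omega : 1 ≤ m)
        have : (0:ℝ) ≤ ((m:ℝ)-1)/n := div_nonneg (by linarith) hnpos.le
        positivity
      apply mul_le_mul_of_nonneg_right _ hTnn
      exact_mod_cast hcard
    have step2 : (m:ℝ) * ∑ j ∈ Finset.range (n+2-m), p n j * (K' * W j) = K' * (Q * W n) := by
      have : ∑ j ∈ Finset.range (n+2-m), p n j * (K' * W j)
          = K' * ∑ j ∈ Finset.range (n+2-m), p n j * W j := by
        rw [Finset.mul_sum]; apply Finset.sum_congr rfl; intros; ring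
      rw [this, ← heigen n hn]; ring
    have hmnn : (0:ℝ) ≤ (m:ℝ) := Nat.cast_nonneg m
    have hCn : (m:ℝ) * ((N₁:ℝ) * ((((m:ℝ)-1)/n) * (K * S))) ≤ δ * W n := by
      have heq : (m:ℝ) * ((N₁:ℝ) * ((((m:ℝ)-1)/n) * (K * S))) = C / n := by
        rw [hC]; field_simp
      rw [heq]
      have h2 : C / n ≤ δ := by rw [div_le_iff₀ hnpos]; linarith
      calc C / n ≤ δ := h2
        _ ≤ δ * W n := by nlinarith
    calc ‖e n‖ ≤ (m:ℝ) * ∑ j ∈ Finset.range (n+2-m), p n j * ‖e j‖ + ‖r n‖ := hnorm n hn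
      _ ≤ (m:ℝ) * (∑ j ∈ Finset.range (n+2-m), p n j * (K' * W j)
            + (N₁:ℝ) * ((((m:ℝ)-1)/n) * (K * S))) + δ * W n := by
          gcongr
          · exact le_trans sum1 (by gcongr)
          · exact (hN₁ n (by omega)).2
      _ = (m:ℝ) * ∑ j ∈ Finset.range (n+2-m), p n j * (K' * W j)
            + (m:ℝ) * ((N₁:ℝ) * ((((m:ℝ)-1)/n) * (K * S))) + δ * W n := by ring
      _ ≤ K' * (Q * W n) + δ * W n + δ * W n := by
          rw [step2]; linarith [hCn]
      _ = ((1+Q)/2 * K') * W n := by rw [hδ]; ring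
  -- Step C: iterate
  set q' : ℝ := (1+Q)/2 with hq'
  have hq'0 : 0 ≤ q' := by rw [hq']; linarith
  have hq'1 : q' < 1 := by rw [hq']; linarith
  have iter : ∀ t : ℕ, ∀ᶠ n in atTop, ‖e n‖ ≤ (q'^t * K) * W n := by
    intro t
    induction t with
    | zero =>
      apply Filter.Eventually.of_forall
      intro n
      simpa using hKbound n
    | succ t ih =>
      have hpos : 0 < q'^t * K := by
        apply mul_pos _ hKpos
        apply pow_pos
        rw [hq']; linarith
      have := stepB (q'^t * K) hpos ih
      apply this.mono
      intro n hn
      calc ‖e n‖ ≤ (q' * (q'^t * K)) * W n := hn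
        _ = (q'^(t+1) * K) * W n := by ring
  intro ε hε
  have htend : Tendsto (fun t : ℕ => q'^t * K) atTop (𝓝 0) := by
    have h0 := (tendsto_pow_atTop_nhds_zero_of_lt_one hq'0 hq'1).mul_const K
    simpa using h0
  obtain ⟨t, ht⟩ := (htend.eventually (gt_mem_nhds hε)).exists
  filter_upwards [iter t] with n hn
  calc ‖e n‖ ≤ (q'^t * K) * W n := hn
    _ ≤ ε * W n := mul_le_mul_of_nonneg_right ht.le (hW n).le


section helper

lemma hfact2 : ∀ t : ℕ, ∏ i ∈ range t, ((i:ℝ)+2) = ((t+1).factorial : ℝ) := by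
  intro t
  induction t with
  | zero => simp
  | succ t ih =>
    rw [Finset.prod_range_succ, ih]
    rw [show t+1+1 = (t+1)+1 from rfl, Nat.factorial_succ (t+1)]
    push_cast
    ring

end helper

/-- Proposition 3.1(ii) (asymptotic transfer, polynomial case): suppose
`a_n = m Σ_{0≤j≤n-m+1} π_{n,j} a_j + b_n` for `n ≥ m-1` with `b_n := a_n` for
`n ≤ m-2`.  If `Re(v) > 1`, `(v+1)⋯(v+m-1) ≠ m!` and `b_n = c n^v + o(n^{Re v})`,
then `a_n = (c / (1 - m! Γ(v+1)/Γ(v+m))) n^v + o(n^{Re v})`. -/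
theorem asymptotic_transfer_poly (m : ℕ) (hm : 2 ≤ m)
    (a b : ℕ → ℂ) (c v : ℂ) (hv : 1 < v.re)
    (hden : (∏ i ∈ Finset.range (m - 1), (v + 1 + (i : ℂ))) ≠ (m.factorial : ℂ))
    (hrec : ∀ n, m - 1 ≤ n →
      a n = (m : ℂ) * ∑ j ∈ Finset.range (n + 2 - m),
          (((n - 1 - j).choose (m - 2) : ℂ) / ((n.choose (m - 1) : ℂ))) * a j
        + b n)
    (hini : ∀ n ≤ m - 2, b n = a n)
    (hb : (fun n : ℕ => b n - c * (n : ℂ) ^ v) =o[atTop] fun n : ℕ => (n : ℝ) ^ v.re) :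
    (fun n : ℕ => a n
        - (c / (1 - (m.factorial : ℂ) * Complex.Gamma (v + 1) / Complex.Gamma (v + m)))
          * (n : ℂ) ^ v)
      =o[atTop] fun n : ℕ => (n : ℝ) ^ v.re := by
  set s : ℝ := v.re with hsdef
  have hs1 : 1 < s := hv
  have hs0 : 0 < s := by linarith
  -- complex denominator
  have hvfac : ∀ i : ℕ, (v+1+(i:ℂ)) ≠ 0 := by
    intro i h
    have : (v+1+(i:ℂ)).re = 0 := by rw [h]; simp
    simp [Complex.add_re] at this
    nlinarith [Nat.cast_nonneg (α := ℝ) i]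
  have hD : (∏ i ∈ Finset.range (m-1), (v + 1 + (i:ℂ))) ≠ 0 :=
    Finset.prod_ne_zero_iff.mpr fun i _ => hvfac i
  set D : ℂ := ∏ i ∈ Finset.range (m-1), (v + 1 + (i:ℂ)) with hDdef
  set Qc : ℂ := (m.factorial : ℂ) / D with hQcdef
  have hQc1 : Qc ≠ 1 := by
    intro h
    rw [hQcdef, div_eq_one_iff_eq hD] at h
    exact hden h.symm
  -- real denominator
  set Ds : ℝ := ∏ i ∈ Finset.range (m-1), (s + 1 + (i:ℝ)) with hDsdef
  have hDs_pos : 0 < Ds := Finset.prod_pos fun i _ => by positivity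
  have hDs_gt : (m.factorial : ℝ) < Ds := by
    have h1 : ∏ i ∈ range (m-1), ((i:ℝ)+2) = (m.factorial : ℝ) := by
      rw [hfact2 (m-1), show m-1+1 = m by omega]
    rw [hDsdef, ← h1]
    apply Finset.prod_lt_prod_of_nonempty
    · intro i _; positivity
    · intro i _; push_cast; linarith
    · exact Finset.nonempty_range_iff.mpr (by omega)
  set Qs : ℝ := (m.factorial : ℝ) / Ds with hQsdef
  have hQs0 : 0 ≤ Qs := div_nonneg (Nat.cast_nonneg _) hDs_pos.le
  have hQs1 : Qs < 1 := (div_lt_one hDs_pos).mpr hDs_gt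
  -- Gamma constant identification
  have hGne : Complex.Gamma (v+1) ≠ 0 := by
    apply Complex.Gamma_ne_zero
    intro k h
    have : (v+1).re = (-(k:ℂ)).re := by rw [h]
    simp at this
    nlinarith [Nat.cast_nonneg (α := ℝ) k]
  have hGam : (m.factorial : ℂ) * Complex.Gamma (v+1) / Complex.Gamma (v+m) = Qc := by
    have hgp := gamma_prod hv (m-1)
    have harg : v + 1 + ((m-1:ℕ):ℂ) = v + m := by
      push_cast [Nat.cast_sub (show 1 ≤ m by omega)]; ring
    rw [harg] at hgp
    rw [hgp, ← hDdef, hQcdef]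
    rw [div_eq_div_iff (mul_ne_zero hGne hD) hD]
    ring
  set A : ℂ := c / (1 - Qc) with hAdef
  have h1Qc : (1 : ℂ) - Qc ≠ 0 := fun h => hQc1 (by linear_combination -h)
  have hA : A * (1 - Qc) = c := div_mul_cancel₀ c h1Qc
  -- sequences
  set u : ℕ → ℂ := fun n => Complex.Gamma (v+1) * wseq v n with hudef
  set E : ℕ → ℂ := fun n => a n - A * u n with hEdef
  set W : ℕ → ℝ := fun n => wseq s n with hWdef
  have hW : ∀ n, 0 < W n := fun n => wseq_real_pos hs0 n
  -- eigen relations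
  have hu : ∀ n, m - 1 ≤ n → (m:ℂ) * ∑ j ∈ Finset.range (n+2-m),
      (((n-1-j).choose (m-2) : ℂ) / (n.choose (m-1) : ℂ)) * u j = Qc * u n := by
    intro n hn
    have h := eigen (K := ℂ) v m n hm hn hD
    rw [← hDdef] at h
    have h2 : ∑ j ∈ Finset.range (n+2-m),
        (((n-1-j).choose (m-2) : ℂ) / (n.choose (m-1) : ℂ)) * u j
        = Complex.Gamma (v+1) * ∑ j ∈ Finset.range (n+2-m),
          (((n-1-j).choose (m-2) : ℂ) / (n.choose (m-1) : ℂ)) * wseq v j := by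
      rw [Finset.mul_sum]
      refine Finset.sum_congr rfl fun j _ => ?_
      simp only [hudef]; ring
    rw [h2, hQcdef]
    calc (m:ℂ) * (Complex.Gamma (v+1) * ∑ j ∈ Finset.range (n+2-m),
          (((n-1-j).choose (m-2) : ℂ) / (n.choose (m-1) : ℂ)) * wseq v j)
        = Complex.Gamma (v+1) * ((m:ℂ) * ∑ j ∈ Finset.range (n+2-m),
          (((n-1-j).choose (m-2) : ℂ) / (n.choose (m-1) : ℂ)) * wseq v j) := by ring
      _ = Complex.Gamma (v+1) * (((m.factorial : ℂ) / D) * wseq v n) := by rw [h]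
      _ = (m.factorial : ℂ) / D * u n := by simp only [hudef]; ring
  have heigenR : ∀ n, m - 1 ≤ n → (m:ℝ) * ∑ j ∈ Finset.range (n+2-m),
      (((n-1-j).choose (m-2) : ℝ) / (n.choose (m-1) : ℝ)) * W j = Qs * W n := by
    intro n hn
    have h := eigen (K := ℝ) s m n hm hn hDs_pos.ne'
    rw [← hDsdef] at h
    rw [hWdef, hQsdef]
    exact h
  -- recursion for E
  have hErec : ∀ n, m - 1 ≤ n → E n = (m:ℂ) * ∑ j ∈ Finset.range (n+2-m),
      (((n-1-j).choose (m-2) : ℂ) / (n.choose (m-1) : ℂ)) * E j + (b n - c * u n) := by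
    intro n hn
    have h3 : ∑ j ∈ Finset.range (n+2-m),
        (((n-1-j).choose (m-2) : ℂ) / (n.choose (m-1) : ℂ)) * E j
        = ∑ j ∈ Finset.range (n+2-m),
            (((n-1-j).choose (m-2) : ℂ) / (n.choose (m-1) : ℂ)) * a j
          - A * ∑ j ∈ Finset.range (n+2-m),
            (((n-1-j).choose (m-2) : ℂ) / (n.choose (m-1) : ℂ)) * u j := by
      rw [Finset.mul_sum, ← Finset.sum_sub_distrib]
      refine Finset.sum_congr rfl fun j _ => ?_
      simp only [hEdef]; ring
    simp only [hEdef]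
    linear_combination (hrec n hn) - (m:ℂ) * h3 + A * (hu n hn) - (u n) * hA
  -- littleo facts
  have hnormpow : ∀ n : ℕ, 1 ≤ n → ‖(n:ℂ)^v‖ = (n:ℝ)^s := by
    intro n hn
    have hpos : (0:ℝ) < (n:ℝ) := by exact_mod_cast (by omega : 0 < n)
    rw [show ((n:ℂ)) = (((n:ℝ)):ℂ) by push_cast; rfl]
    exact Complex.norm_cpow_eq_rpow_re_of_pos hpos v
  have hcu : (fun n : ℕ => u n - (n:ℂ)^v) =o[atTop] (fun n : ℕ => (n:ℝ)^s) := by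
    rw [isLittleO_iff]
    intro ε hε
    have htend : Tendsto (fun n : ℕ => ‖u n / (n:ℂ)^v - 1‖) atTop (𝓝 0) := by
      have h0 := (tendsto_wseq_complex hv).sub (tendsto_const_nhds (x := (1:ℂ)))
      rw [sub_self] at h0
      have := h0.norm
      rw [norm_zero] at this
      have heq2 : (fun n : ℕ => ‖u n / (n:ℂ)^v - 1‖)
          = fun n : ℕ => ‖Complex.Gamma (v+1) * wseq v n / (n:ℂ)^v - 1‖ := by
        funext k; simp only [hudef]
      rw [heq2]
      exact this
    have hev := htend.eventually (gt_mem_nhds hε)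
    filter_upwards [hev, eventually_ge_atTop 1] with n h1 h2
    have hnv : ((n:ℂ))^v ≠ 0 := by
      rw [Complex.cpow_def_of_ne_zero (Nat.cast_ne_zero.mpr (by omega))]
      exact Complex.exp_ne_zero _
    have heq : u n - (n:ℂ)^v = (u n / (n:ℂ)^v - 1) * (n:ℂ)^v := by
      field_simp
    rw [heq, norm_mul]
    have hgn : ‖(n:ℂ)^v‖ = (n:ℝ)^s := hnormpow n h2
    rw [hgn]
    have hgnorm : ‖(n:ℝ)^s‖ = (n:ℝ)^s := by
      rw [Real.norm_eq_abs, abs_of_nonneg (Real.rpow_nonneg (Nat.cast_nonneg n) s)]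
    rw [hgnorm]
    exact mul_le_mul_of_nonneg_right h1.le (Real.rpow_nonneg (Nat.cast_nonneg n) s)
  -- W bounds
  set γ : ℝ := Real.Gamma (s+1) with hγdef
  have hγpos : 0 < γ := Real.Gamma_pos_of_pos (by linarith)
  have hWlow : ∀ᶠ n : ℕ in atTop, (n:ℝ)^s ≤ (2*γ) * W n := by
    have hev := (tendsto_wseq_real hs0).eventually
      (eventually_gt_nhds (by norm_num : (1/2:ℝ) < 1))
    filter_upwards [hev, eventually_ge_atTop 1] with n h1 h2
    have hpos : (0:ℝ) < (n:ℝ)^s := Real.rpow_pos_of_pos (by exact_mod_cast (by omega : 0 < n)) s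
    rw [lt_div_iff₀ hpos] at h1
    simp only [hγdef, hWdef]
    nlinarith [h1, hpos]
  have hWup : ∀ᶠ n : ℕ in atTop, W n ≤ (2/γ) * (n:ℝ)^s := by
    have hev := (tendsto_wseq_real hs0).eventually
      (eventually_lt_nhds (by norm_num : (1:ℝ) < 2))
    filter_upwards [hev, eventually_ge_atTop 1] with n h1 h2
    have hpos : (0:ℝ) < (n:ℝ)^s := Real.rpow_pos_of_pos (by exact_mod_cast (by omega : 0 < n)) s
    rw [div_lt_iff₀ hpos] at h1
    simp only [hγdef, hWdef]
    have hγW : 0 < wseq s n := wseq_real_pos hs0 n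
    rw [div_mul_eq_mul_div, le_div_iff₀ hγpos]
    nlinarith [h1, hpos, hγW]
  -- r bound
  have hrO : (fun n : ℕ => b n - c * u n) =o[atTop] (fun n : ℕ => (n:ℝ)^s) := by
    have h1 : (fun n : ℕ => b n - c * u n)
        = fun n : ℕ => (b n - c * (n:ℂ)^v) - c * (u n - (n:ℂ)^v) := by
      funext n; ring
    rw [h1]
    exact hb.sub (hcu.const_mul_left c)
  have hrW : ∀ ε > 0, ∀ᶠ n : ℕ in atTop, ‖b n - c * u n‖ ≤ ε * W n := by
    intro ε hε
    have h1 := isLittleO_iff.mp hrO (show (0:ℝ) < ε / (2*γ) by positivity)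
    filter_upwards [h1, hWlow] with n hn1 hn2
    have hgnorm : ‖(n:ℝ)^s‖ = (n:ℝ)^s := by
      rw [Real.norm_eq_abs, abs_of_nonneg (Real.rpow_nonneg (Nat.cast_nonneg n) s)]
    rw [hgnorm] at hn1
    calc ‖b n - c * u n‖ ≤ ε / (2*γ) * (n:ℝ)^s := hn1
      _ ≤ ε / (2*γ) * ((2*γ) * W n) := by
          apply mul_le_mul_of_nonneg_left hn2; positivity
      _ = ε * W n := by field_simp [hγpos.ne']
  -- W tends to infinity
  have hWtop : Tendsto W atTop atTop := by
    have hpow : Tendsto (fun n : ℕ => (n:ℝ)^s / (2*γ)) atTop atTop :=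
      ((tendsto_rpow_atTop hs0).comp tendsto_natCast_atTop_atTop).atTop_div_const
        (by positivity)
    apply tendsto_atTop_mono' atTop _ hpow
    filter_upwards [hWlow] with n hn
    rw [div_le_iff₀ (by positivity)]
    linarith
  -- apply stability
  have hE := stability m hm E (fun n => b n - c * u n) W hW hWtop Qs hQs0 hQs1
    heigenR hErec hrW
  -- conclude
  rw [show (c / (1 - (m.factorial : ℂ) * Complex.Gamma (v + 1) / Complex.Gamma (v + m))) = A by
    rw [hAdef, hGam]]
  have hEo : (fun n : ℕ => E n) =o[atTop] (fun n : ℕ => (n:ℝ)^s) := by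
    rw [isLittleO_iff]
    intro ε hε
    have h1 := hE (ε * γ / 2) (by positivity)
    filter_upwards [h1, hWup] with n hn1 hn2
    have hgnorm : ‖(n:ℝ)^s‖ = (n:ℝ)^s := by
      rw [Real.norm_eq_abs, abs_of_nonneg (Real.rpow_nonneg (Nat.cast_nonneg n) s)]
    rw [hgnorm]
    calc ‖E n‖ ≤ ε * γ / 2 * W n := hn1
      _ ≤ ε * γ / 2 * ((2/γ) * (n:ℝ)^s) := by
          apply mul_le_mul_of_nonneg_left hn2; positivity
      _ = ε * (n:ℝ)^s := by field_simp [hγpos.ne']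
  have hfinal : (fun n : ℕ => a n - A * (n:ℂ)^v)
      = fun n : ℕ => E n + A * (u n - (n:ℂ)^v) := by
    funext n; simp only [hEdef]; ring
  rw [hfinal]
  exact hEo.add (hcu.const_mul_left A)
end

section
/- For every complex number λ with Re(λ) < 2, the series Σ_{j=0}^{∞} ( ∏_{i=0}^{j−1} (λ+i)/(i+1) ) / ((j+1)(j+2)) converges and its sum equals 1/(2−λ). (Here ∏_{i=0}^{j−1} (λ+i)/(i+1) is the generalized binomial coefficient C(λ+j−1, j), with the empty product for j = 0 equal to 1.) -/
open Finset Filter Topology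

set_option maxHeartbeats 1000000 in
/-- For every complex `λ` with `Re(λ) < 2`, one has
`Σ_{j≥0} C(λ+j-1, j) / ((j+1)(j+2)) = 1/(2-λ)`, where
`C(λ+j-1, j) = ∏_{i=0}^{j-1} (λ+i)/(i+1)` is the generalized binomial coefficient. -/
theorem sum_generalized_binomial_div (lam : ℂ) (hlam : lam.re < 2) :
    HasSum
      (fun j : ℕ => (∏ i ∈ Finset.range j, (lam + (i : ℂ)) / ((i : ℂ) + 1))
        / (((j : ℂ) + 1) * ((j : ℂ) + 2)))
      (1 / (2 - lam)) := by
  set δ : ℝ := (2 - lam.re) / 2 with hδdef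
  have hδ : 0 < δ := by rw [hδdef]; linarith
  set t : ℕ → ℂ := fun n =>
    (∏ i ∈ Finset.range n, (lam + (i : ℂ)) / ((i : ℂ) + 1)) / ((n : ℂ) + 1) with ht
  have hne1 : ∀ n : ℕ, ((n : ℂ) + 1) ≠ 0 := by
    intro n
    rw [show ((n:ℂ)+1) = ((n+1:ℕ):ℂ) by push_cast; ring]
    exact_mod_cast Nat.succ_ne_zero n
  have hne2 : ∀ n : ℕ, ((n : ℂ) + 2) ≠ 0 := by
    intro n
    rw [show ((n:ℂ)+2) = ((n+2:ℕ):ℂ) by push_cast; ring]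
    exact_mod_cast Nat.succ_ne_zero (n+1)
  have hlam2 : (2 : ℂ) - lam ≠ 0 := by
    intro h
    have h2 := congrArg Complex.re h
    simp at h2
    linarith
  have ht0 : t 0 = 1 := by simp [ht]
  have htrec : ∀ n : ℕ, t (n+1) = t n * ((lam + (n:ℂ)) / ((n:ℂ) + 2)) := by
    intro n
    have h1 := hne1 n
    have h2 := hne2 n
    simp only [ht, prod_range_succ]
    push_cast
    rw [show (n:ℂ)+1+1 = n+2 by ring]
    field_simp
  -- the summand equals t n / (n+2)
  have ha : ∀ n : ℕ, (∏ i ∈ Finset.range n, (lam + (i : ℂ)) / ((i : ℂ) + 1))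
      / (((n : ℂ) + 1) * ((n : ℂ) + 2)) = t n / ((n:ℂ) + 2) := by
    intro n
    have h1 := hne1 n
    have h2 := hne2 n
    rw [ht]
    field_simp
  -- partial sums
  have hS : ∀ n : ℕ, (∑ j ∈ Finset.range n,
      (∏ i ∈ Finset.range j, (lam + (i : ℂ)) / ((i : ℂ) + 1))
        / (((j : ℂ) + 1) * ((j : ℂ) + 2))) = (1 - t n) / (2 - lam) := by
    intro n
    induction n with
    | zero => simp [ht0]
    | succ n ih =>
      have h1 := hne1 n
      have h2 := hne2 n
      rw [Finset.sum_range_succ, ih, ha n, htrec n]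
      field_simp
      ring
  -- norm recurrence
  have hcn2 : ∀ n : ℕ, ‖((n:ℂ) + 2)‖ = (n:ℝ) + 2 := by
    intro n
    rw [show ((n:ℂ) + 2) = ((n+2 : ℕ) : ℂ) by push_cast; ring, Complex.norm_natCast]
    push_cast; ring
  have hnormrec : ∀ n : ℕ, ‖t (n+1)‖ = ‖t n‖ * (‖lam + (n:ℂ)‖ / ((n:ℝ) + 2)) := by
    intro n
    rw [htrec n, norm_mul]
    congr 1
    rw [norm_div, hcn2 n]
  -- eventual bound on ‖lam + n‖
  obtain ⟨N, hN⟩ : ∃ N : ℕ, ∀ n ≥ N, ‖lam + (n:ℂ)‖ ≤ (n:ℝ) + 2 - δ := by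
    refine ⟨⌈lam.im^2/δ + |lam.re| + δ⌉₊, fun n hn => ?_⟩
    have hge : lam.im^2/δ + |lam.re| + δ ≤ (n:ℝ) :=
      le_trans (Nat.le_ceil _) (Nat.cast_le.mpr hn)
    have habs : -|lam.re| ≤ lam.re := neg_abs_le lam.re
    have habs' : (0:ℝ) ≤ |lam.re| := abs_nonneg _
    have hdiv : (0:ℝ) ≤ lam.im^2/δ := div_nonneg (sq_nonneg _) hδ.le
    have h0 : (0:ℝ) ≤ (n:ℝ) + 2 - δ := by linarith
    have hsq : ‖lam + (n:ℂ)‖^2 = (lam.re + n)^2 + lam.im^2 := by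
      rw [Complex.sq_norm, Complex.normSq_apply]
      simp [Complex.add_re, Complex.add_im]
      ring
    have hcancel : δ * (lam.im^2/δ) = lam.im^2 := mul_div_cancel₀ _ hδ.ne'
    have key : (lam.re + n)^2 + lam.im^2 ≤ ((n:ℝ) + 2 - δ)^2 := by
      have h2δ : 2 - lam.re = 2 * δ := by rw [hδdef]; ring
      nlinarith [mul_le_mul_of_nonneg_left hge hδ.le, mul_pos hδ hδ,
        mul_nonneg hδ.le habs', sq_nonneg lam.im]
    nlinarith [norm_nonneg (lam + (n:ℂ)), hsq]
  -- H and its log lower bound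
  set H : ℕ → ℝ := fun n => ∑ i ∈ Finset.range n, 1/((i:ℝ)+2) with hH
  have hHsucc : ∀ n : ℕ, H (n+1) = H n + 1/((n:ℝ)+2) := fun n => Finset.sum_range_succ _ n
  have hHlog : ∀ n : ℕ, Real.log ((n:ℝ)+2) - Real.log 2 ≤ H n := by
    intro n
    have hkey : ∀ i ∈ Finset.range n,
        Real.log (((i+1:ℕ):ℝ)+2) - Real.log ((i:ℝ)+2) ≤ 1/((i:ℝ)+2) := by
      intro i _
      have h2 : (0:ℝ) < (i:ℝ)+2 := by positivity
      have h3 : (0:ℝ) < (i:ℝ)+3 := by positivity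
      have hlog := Real.log_le_sub_one_of_pos (show (0:ℝ) < ((i:ℝ)+3)/((i:ℝ)+2) by positivity)
      rw [Real.log_div h3.ne' h2.ne'] at hlog
      have heq : ((i:ℝ)+3)/((i:ℝ)+2) - 1 = 1/((i:ℝ)+2) := by
        field_simp
        norm_num
      have hc : ((i+1:ℕ):ℝ) + 2 = (i:ℝ)+3 := by push_cast; ring
      rw [hc]
      linarith
    have hsum := Finset.sum_le_sum hkey
    rw [Finset.sum_range_sub (fun i => Real.log ((i:ℝ)+2))] at hsum
    have h0 : ((0:ℕ):ℝ) + 2 = 2 := by norm_num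
    rw [h0] at hsum
    exact hsum
  -- decreasing quantity
  set u : ℕ → ℝ := fun n => ‖t n‖ * Real.exp (δ * H n) with hu
  have hustep : ∀ n, N ≤ n → u (n+1) ≤ u n := by
    intro n hn
    have hb := hN n hn
    have hp2 : (0:ℝ) < (n:ℝ)+2 := by positivity
    have hratio : ‖lam + (n:ℂ)‖ / ((n:ℝ)+2) ≤ Real.exp (-(δ/((n:ℝ)+2))) := by
      have h1 : 1 - δ/((n:ℝ)+2) ≤ Real.exp (-(δ/((n:ℝ)+2))) := by
        have := Real.add_one_le_exp (-(δ/((n:ℝ)+2))); linarith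
      have h2 : ‖lam + (n:ℂ)‖ / ((n:ℝ)+2) ≤ 1 - δ/((n:ℝ)+2) := by
        rw [div_le_iff₀ hp2]
        have he : (1 - δ/((n:ℝ)+2)) * ((n:ℝ)+2) = (n:ℝ) + 2 - δ := by
          field_simp
        rw [he]
        exact hb
      linarith
    show ‖t (n+1)‖ * Real.exp (δ * H (n+1)) ≤ ‖t n‖ * Real.exp (δ * H n)
    rw [hnormrec n, hHsucc n, mul_add, Real.exp_add]
    have hend : Real.exp (-(δ/((n:ℝ)+2))) * (Real.exp (δ * H n) * Real.exp (δ * (1/((n:ℝ)+2))))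
        = Real.exp (δ * H n) := by
      rw [← Real.exp_add, ← Real.exp_add]
      congr 1
      ring
    calc ‖t n‖ * (‖lam + (n:ℂ)‖ / ((n:ℝ) + 2)) *
          (Real.exp (δ * H n) * Real.exp (δ * (1 / ((n:ℝ) + 2))))
        ≤ ‖t n‖ * Real.exp (-(δ/((n:ℝ)+2))) *
          (Real.exp (δ * H n) * Real.exp (δ * (1 / ((n:ℝ) + 2)))) := by
          gcongr
      _ = ‖t n‖ * Real.exp (δ * H n) := by rw [mul_assoc, hend]
  have hubound : ∀ n, N ≤ n → u n ≤ u N := by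
    intro n hn
    induction n, hn using Nat.le_induction with
    | base => exact le_refl _
    | succ n hn ih => exact (hustep n hn).trans ih
  have huN : 0 ≤ u N := mul_nonneg (norm_nonneg _) (Real.exp_pos _).le
  -- consequence: bound on ‖t n‖ by rpow
  set C : ℝ := u N * Real.exp (δ * Real.log 2) with hC
  have hC0 : 0 ≤ C := mul_nonneg huN (Real.exp_pos _).le
  have htbound : ∀ n, N ≤ n → ‖t n‖ ≤ C * ((n:ℝ)+2) ^ (-δ) := by
    intro n hn
    have h1 : ‖t n‖ * Real.exp (δ * H n) ≤ u N := hubound n hn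
    have hp2 : (0:ℝ) < (n:ℝ)+2 := by positivity
    have hepos : (0:ℝ) < Real.exp (δ * H n) := Real.exp_pos _
    have hrpow : ((n:ℝ)+2) ^ (-δ) = Real.exp (Real.log ((n:ℝ)+2) * (-δ)) :=
      Real.rpow_def_of_pos hp2 _
    have h2 : ‖t n‖ ≤ u N * Real.exp (-(δ * H n)) := by
      have h2' : ‖t n‖ ≤ u N / Real.exp (δ * H n) := (le_div_iff₀ hepos).mpr h1
      rwa [div_eq_mul_inv, ← Real.exp_neg] at h2'
    have h3 : Real.exp (-(δ * H n)) ≤ Real.exp (δ * Real.log 2) * ((n:ℝ)+2) ^ (-δ) := by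
      rw [hrpow, ← Real.exp_add, Real.exp_le_exp]
      nlinarith [mul_le_mul_of_nonneg_left (hHlog n) hδ.le]
    calc ‖t n‖ ≤ u N * Real.exp (-(δ * H n)) := h2
      _ ≤ u N * (Real.exp (δ * Real.log 2) * ((n:ℝ)+2) ^ (-δ)) := by gcongr
      _ = C * ((n:ℝ)+2) ^ (-δ) := by rw [hC]; ring
  -- tendsto t → 0
  have htop : Tendsto (fun n : ℕ => (n:ℝ)+2) atTop atTop :=
    tendsto_atTop_add_const_right _ 2 tendsto_natCast_atTop_atTop
  have hg0 : Tendsto (fun n : ℕ => C * ((n:ℝ)+2) ^ (-δ)) atTop (𝓝 0) := by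
    have h1 := (tendsto_rpow_neg_atTop hδ).comp htop
    have h2 := h1.const_mul C
    simpa using h2
  have htzero : Tendsto t atTop (𝓝 0) := by
    rw [tendsto_zero_iff_norm_tendsto_zero]
    apply squeeze_zero' (Eventually.of_forall fun n => norm_nonneg _) _ hg0
    filter_upwards [eventually_ge_atTop N] with n hn
    exact htbound n hn
  -- summability of norms
  have hsummable : Summable (fun n : ℕ =>
      ‖(∏ i ∈ Finset.range n, (lam + (i : ℂ)) / ((i : ℂ) + 1))
        / (((n : ℂ) + 1) * ((n : ℂ) + 2))‖) := by
    have hgsum : Summable (fun n : ℕ => C * ((n:ℝ)+2) ^ (-(1+δ))) := by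
      apply Summable.mul_left
      have h1 : Summable (fun n : ℕ => (n:ℝ) ^ (-(1+δ))) :=
        Real.summable_nat_rpow.mpr (by linarith)
      have h2 := (summable_nat_add_iff 2).mpr h1
      apply h2.congr
      intro n
      push_cast
      ring_nf
    apply summable_of_isBigO_nat hgsum
    apply Asymptotics.IsBigO.of_bound 1
    filter_upwards [eventually_ge_atTop N] with n hn
    have hp2 : (0:ℝ) < (n:ℝ)+2 := by positivity
    have heq : ‖(∏ i ∈ Finset.range n, (lam + (i : ℂ)) / ((i : ℂ) + 1))
        / (((n : ℂ) + 1) * ((n : ℂ) + 2))‖ = ‖t n‖ / ((n:ℝ)+2) := by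
      rw [ha n, norm_div, hcn2 n]
    have hsplit : ((n:ℝ)+2) ^ (-(1+δ)) = ((n:ℝ)+2) ^ (-δ) / ((n:ℝ)+2) := by
      rw [show -(1+δ) = -δ - 1 by ring, Real.rpow_sub hp2, Real.rpow_one]
    have hCnonneg : (0:ℝ) ≤ C * ((n:ℝ)+2) ^ (-(1+δ)) :=
      mul_nonneg hC0 (Real.rpow_nonneg hp2.le _)
    rw [Real.norm_eq_abs, Real.norm_eq_abs, one_mul, abs_of_nonneg hCnonneg, heq,
      abs_of_nonneg (div_nonneg (norm_nonneg _) hp2.le), hsplit, ← mul_div_assoc]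
    gcongr
    exact htbound n hn
  -- conclude
  rw [hasSum_iff_tendsto_nat_of_summable_norm hsummable]
  have hfin : Tendsto (fun n : ℕ => (1 - t n) / (2 - lam)) atTop (𝓝 (1 / (2 - lam))) := by
    have h1 : Tendsto (fun n : ℕ => 1 - t n) atTop (𝓝 1) := by
      simpa using tendsto_const_nhds.sub htzero
    simpa using h1.div_const (2 - lam)
  apply hfin.congr
  intro n
  exact (hS n).symm
end
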